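/- Let u ∈ C(M,ℝ) and suppose the value ∫_M u·Q_ω dμ_ω is the same for all ω ∈ C(M,ℝ) (i.e. ∫_M u·Q_ω dμ_ω = ∫_M u·Q_{ω'} dμ_{ω'} for all ω, ω' ∈ C(M,ℝ)). Then u lies in the kernel of P. (Intermediate claim in the proof of Proposition 3.1.) -/

import Mathlib

/-!
Because `Q_ω μ_ω = (Q + Pω) μ`, the map `ω ↦ ∫ u Q_ω dμ_ω` is affine with linear part
`ω ↦ ∫ u Pω dμ = ∫ (Pu) ω dμ`. If it is constant, `Pu` is orthogonal to every continuous
function, in particular to itself, and a continuous function with `∫ (Pu)² dμ = 0` vanishes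
because `μ` charges every nonempty open set.
-/

open MeasureTheory

variable {M : Type*} [TopologicalSpace M] [MeasurableSpace M]

/-- The transformed Q-curvature `Q_ω = e^{-nω}(Q + Pω)`. -/
noncomputable def Qcurv (n : ℝ) (P : C(M, ℝ) →ₗ[ℝ] C(M, ℝ)) (Q ω : C(M, ℝ)) : C(M, ℝ) :=
  ⟨fun x => Real.exp (-n * ω x) * (Q x + P ω x),
    (Real.continuous_exp.comp (continuous_const.mul ω.continuous)).mul
      (Q.continuous.add (P ω).continuous)⟩

/-- The conformally rescaled measure `μ_ω`, with density `e^{nω}` w.r.t. `μ`. -/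
noncomputable def confMeasure (μ : Measure M) (n : ℝ) (ω : C(M, ℝ)) : Measure M :=
  μ.withDensity fun x => ENNReal.ofReal (Real.exp (n * ω x))

/-- `𝒩(𝒬) = {u ∈ ker P : ∫ u·Q dμ = 0}`. -/
def NQ (μ : Measure M) (P : C(M, ℝ) →ₗ[ℝ] C(M, ℝ)) (Q : C(M, ℝ)) : Set C(M, ℝ) :=
  {u | P u = 0 ∧ ∫ x, u x * Q x ∂μ = 0}

/-- `ℱ = ⋂_ω ℱ^ω`, where `ℱ^ω` is the set of `f` not `L²(μ_ω)`-orthogonal to `𝒩(𝒬)`. -/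
def Fcal (μ : Measure M) (n : ℝ) (P : C(M, ℝ) →ₗ[ℝ] C(M, ℝ)) (Q : C(M, ℝ)) : Set C(M, ℝ) :=
  {f | ∀ ω : C(M, ℝ), ∃ u ∈ NQ μ P Q, ∫ x, f x * u x ∂(confMeasure μ n ω) ≠ 0}

variable [BorelSpace M] [CompactSpace M] [ConnectedSpace M]
variable (μ : Measure M) [IsFiniteMeasure μ] [Measure.IsOpenPosMeasure μ]
variable (n : ℝ) (P : C(M, ℝ) →ₗ[ℝ] C(M, ℝ)) (Q : C(M, ℝ))


section

variable {X : Type*} [TopologicalSpace X] [MeasurableSpace X] [OpensMeasurableSpace X]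

theorem integral_confMeasure (μ : Measure X) (n : ℝ) (ω : C(X, ℝ)) (f : X → ℝ) :
    ∫ x, f x ∂(confMeasure μ n ω) = ∫ x, Real.exp (n * ω x) * f x ∂μ := by
  have hmeas : Measurable fun x => ENNReal.ofReal (Real.exp (n * ω x)) := by fun_prop
  rw [confMeasure, integral_withDensity_eq_integral_toReal_smul hmeas
    (.of_forall fun _ => ENNReal.ofReal_lt_top)]
  simp only [ENNReal.toReal_ofReal (Real.exp_pos _).le, smul_eq_mul]

theorem integral_mul_Qcurv_confMeasure (μ : Measure X) (n : ℝ) (P : C(X, ℝ) →ₗ[ℝ] C(X, ℝ))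
    (Q ω u : C(X, ℝ)) :
    ∫ x, u x * Qcurv n P Q ω x ∂(confMeasure μ n ω) = ∫ x, u x * (Q x + P ω x) ∂μ := by
  rw [integral_confMeasure]
  congr 1 with x
  simp only [Qcurv, ContinuousMap.coe_mk]
  have hexp : Real.exp (n * ω x) * Real.exp (-n * ω x) = 1 := by
    rw [← Real.exp_add, neg_mul, add_neg_cancel, Real.exp_zero]
  linear_combination (u x * (Q x + P ω x)) * hexp

variable [CompactSpace X]

theorem ContinuousMap.integrable_of_compactSpace (μ : Measure X) [IsFiniteMeasure μ]
    (f : C(X, ℝ)) : Integrable f μ :=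
  f.continuous.integrable_of_hasCompactSupport (HasCompactSupport.of_compactSpace f)

theorem integral_mul_apply_eq_zero_of_forall_integral_mul_Qcurv_eq (μ : Measure X)
    [IsFiniteMeasure μ] (n : ℝ) (P : C(X, ℝ) →ₗ[ℝ] C(X, ℝ)) (Q u : C(X, ℝ))
    (h : ∀ ω ω' : C(X, ℝ),
      ∫ x, u x * Qcurv n P Q ω x ∂(confMeasure μ n ω) =
        ∫ x, u x * Qcurv n P Q ω' x ∂(confMeasure μ n ω'))
    (ω : C(X, ℝ)) : ∫ x, u x * P ω x ∂μ = 0 := by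
  have h_affine : ∀ v : C(X, ℝ),
      ∫ x, u x * (Q x + P v x) ∂μ = ∫ x, u x * Q x ∂μ + ∫ x, u x * P v x ∂μ := fun v => by
    simp only [mul_add]
    exact integral_add ((u * Q).integrable_of_compactSpace μ)
      ((u * P v).integrable_of_compactSpace μ)
  have := h ω 0
  rw [integral_mul_Qcurv_confMeasure, integral_mul_Qcurv_confMeasure, h_affine, h_affine,
    map_zero] at this
  simpa using this

theorem ContinuousMap.eq_zero_of_forall_integral_mul_eq_zero (μ : Measure X) [IsFiniteMeasure μ]
    [μ.IsOpenPosMeasure] (f : C(X, ℝ)) (h : ∀ g : C(X, ℝ), ∫ x, f x * g x ∂μ = 0) : f = 0 := by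
  by_contra hf
  obtain ⟨x, hx⟩ := DFunLike.ne_iff.mp hf
  have hpos : 0 < ∫ x, f x * f x ∂μ :=
    (f * f).continuous.integral_pos_of_hasCompactSupport_nonneg_nonzero
      (HasCompactSupport.of_compactSpace _) (fun y => mul_self_nonneg (f y))
      (x := x) (mul_self_ne_zero.mpr hx)
  exact hpos.ne' (h f)

end

theorem stmt10
    (hPsa : ∀ u v : C(M, ℝ), ∫ x, u x * P v x ∂μ = ∫ x, P u x * v x ∂μ)
    (u : C(M, ℝ))
    (h : ∀ ω ω' : C(M, ℝ),
      ∫ x, u x * Qcurv n P Q ω x ∂(confMeasure μ n ω) =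
        ∫ x, u x * Qcurv n P Q ω' x ∂(confMeasure μ n ω')) :
    P u = 0 :=
  (P u).eq_zero_of_forall_integral_mul_eq_zero μ fun ω =>
    (hPsa u ω).symm.trans
      (integral_mul_apply_eq_zero_of_forall_integral_mul_Qcurv_eq μ n P Q u h ω)
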